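/- Let W be a 3×3 matrix with nonnegative real entries whose three row sums and three column sums all equal 3, and suppose w_{ii} = 1 and w_{jj} = 1 for two distinct indices i ≠ j. If the map Φ_W is positive, then Φ_W is optimal. -/

import Mathlib

open Matrix BigOperators
open scoped ComplexOrder

/-- The generalized Choi map `Φ_W(X) = D_W(X) - X`, as a linear map. -/
noncomputable def PhiW (W : Matrix (Fin 3) (Fin 3) ℝ) :
    Matrix (Fin 3) (Fin 3) ℂ →ₗ[ℂ] Matrix (Fin 3) (Fin 3) ℂ where
  toFun X := Matrix.diagonal (fun i => ∑ j, (W i j : ℂ) * X j j) - X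
  map_add' X Y := by
    ext i j
    by_cases h : i = j <;>
      simp [Matrix.diagonal_apply, h, Matrix.add_apply, mul_add,
        Finset.sum_add_distrib] <;> ring
  map_smul' r X := by
    ext i j
    by_cases h : i = j <;>
      simp [Matrix.diagonal_apply, h, Matrix.smul_apply, Finset.mul_sum,
        smul_eq_mul, mul_sub, mul_left_comm]

/-- `Φ` is a positive map. -/
def IsPositiveMap (Φ : Matrix (Fin 3) (Fin 3) ℂ →ₗ[ℂ] Matrix (Fin 3) (Fin 3) ℂ) : Prop :=
  ∀ X : Matrix (Fin 3) (Fin 3) ℂ, X.PosSemidef → (Φ X).PosSemidef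

/-- The Choi matrix `∑ i j, E_{ij} ⊗ Ψ(E_{ij})` of a linear map. -/
def ChoiMatrix (Ψ : Matrix (Fin 3) (Fin 3) ℂ →ₗ[ℂ] Matrix (Fin 3) (Fin 3) ℂ) :
    Matrix (Fin 3 × Fin 3) (Fin 3 × Fin 3) ℂ :=
  Matrix.of fun p q => Ψ (Matrix.single p.1 q.1 1) p.2 q.2

/-- `Ψ` is completely positive iff its Choi matrix is positive semidefinite. -/
def IsCompletelyPositive
    (Ψ : Matrix (Fin 3) (Fin 3) ℂ →ₗ[ℂ] Matrix (Fin 3) (Fin 3) ℂ) : Prop :=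
  (ChoiMatrix Ψ).PosSemidef

/-- A positive map `Φ` is optimal if for every completely positive map `Ψ` such that
`Φ - Ψ` is positive, one has `Ψ = 0`. -/
def IsOptimal (Φ : Matrix (Fin 3) (Fin 3) ℂ →ₗ[ℂ] Matrix (Fin 3) (Fin 3) ℂ) : Prop :=
  ∀ Ψ : Matrix (Fin 3) (Fin 3) ℂ →ₗ[ℂ] Matrix (Fin 3) (Fin 3) ℂ,
    IsCompletelyPositive Ψ → IsPositiveMap (Φ - Ψ) → Ψ = 0

/-!
If `Ψ` is completely positive and `Φ - Ψ` is positive, then every `x` with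
`⟪x, Φ (x x*) x⟫ = 0` gives `⟪x̄ ⊗ x, C_Ψ (x̄ ⊗ x)⟫ = ⟪x, Ψ (x x*) x⟫ ≤ 0`, so `x̄ ⊗ x` lies in the
kernel of the positive semidefinite Choi matrix `C_Ψ`. For `Φ_W` with row sums `3` this happens
for every unimodular `x` (there `Φ_W (x x*) = 3 - x x*`), and for `x = e_k` whenever `w_kk = 1`.
Testing unimodular `x = (1, α, β)` with `α, β ∈ {±1, ±i}` shows that the `x̄ ⊗ x` span the
off-diagonal coordinates together with `∑ e_a ⊗ e_a`; with `e_i ⊗ e_i` and `e_j ⊗ e_j` they span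
everything, so `C_Ψ = 0` and `Ψ = 0`.
-/

def conjKronSelf {ι : Type*} (x : ι → ℂ) : ι × ι → ℂ := fun p => star (x p.1) * x p.2

lemma conjKronSelf_single {ι : Type*} [DecidableEq ι] (k : ι) :
    conjKronSelf (Pi.single k (1 : ℂ)) = Pi.single (k, k) 1 := by
  ext ⟨a, b⟩
  by_cases ha : a = k <;> by_cases hb : b = k <;> simp [conjKronSelf, ha, hb]

lemma star_conjKronSelf_dotProduct_choiMatrix_mulVec
    (Ψ : Matrix (Fin 3) (Fin 3) ℂ →ₗ[ℂ] Matrix (Fin 3) (Fin 3) ℂ) (x : Fin 3 → ℂ) :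
    star (conjKronSelf x) ⬝ᵥ ChoiMatrix Ψ *ᵥ conjKronSelf x
      = star x ⬝ᵥ Ψ (vecMulVec x (star x)) *ᵥ x := by
  have hΨ : Ψ (vecMulVec x (star x)) = ∑ a, ∑ b, (x a * star (x b)) • Ψ (single a b 1) := by
    conv_lhs => rw [matrix_eq_sum_single (vecMulVec x (star x))]
    simp [map_sum, ← map_smul, smul_single, vecMulVec_apply]
  rw [hΨ]
  simp only [ChoiMatrix, conjKronSelf, dotProduct, mulVec, Fintype.sum_prod_type,
    Matrix.sum_apply, Matrix.smul_apply, smul_eq_mul, Pi.star_apply, Matrix.of_apply,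
    StarMul.star_mul, star_star, Finset.mul_sum, Finset.sum_mul]
  simp only [Fin.sum_univ_three]
  ring

lemma eq_zero_of_choiMatrix_eq_zero
    {Ψ : Matrix (Fin 3) (Fin 3) ℂ →ₗ[ℂ] Matrix (Fin 3) (Fin 3) ℂ} (h : ChoiMatrix Ψ = 0) :
    Ψ = 0 := by
  refine (Matrix.stdBasis ℂ (Fin 3) (Fin 3)).ext fun ⟨a, b⟩ => ?_
  ext c d
  simpa [stdBasis_eq_single, ChoiMatrix] using congrFun₂ h (a, c) (b, d)

lemma choiMatrix_mulVec_conjKronSelf_eq_zero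
    {Φ Ψ : Matrix (Fin 3) (Fin 3) ℂ →ₗ[ℂ] Matrix (Fin 3) (Fin 3) ℂ}
    (hΨ : IsCompletelyPositive Ψ) (hΦΨ : IsPositiveMap (Φ - Ψ)) {x : Fin 3 → ℂ}
    (hx : star x ⬝ᵥ Φ (vecMulVec x (star x)) *ᵥ x = 0) :
    ChoiMatrix Ψ *ᵥ conjKronSelf x = 0 := by
  have hle : star x ⬝ᵥ Ψ (vecMulVec x (star x)) *ᵥ x ≤ 0 := by
    have := (hΦΨ _ (posSemidef_vecMulVec_self_star x)).dotProduct_mulVec_nonneg x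
    rwa [LinearMap.sub_apply, sub_mulVec, dotProduct_sub, hx, zero_sub, neg_nonneg] at this
  rw [← hΨ.dotProduct_mulVec_zero_iff, star_conjKronSelf_dotProduct_choiMatrix_mulVec]
  refine le_antisymm hle ?_
  rw [← star_conjKronSelf_dotProduct_choiMatrix_mulVec]
  exact hΨ.dotProduct_mulVec_nonneg _

lemma star_dotProduct_phiW_vecMulVec_mulVec (W : Matrix (Fin 3) (Fin 3) ℝ) (x : Fin 3 → ℂ) :
    star x ⬝ᵥ PhiW W (vecMulVec x (star x)) *ᵥ x
      = ∑ i, star (x i) * x i * ∑ j, (W i j : ℂ) * (star (x j) * x j) - (star x ⬝ᵥ x) ^ 2 := by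
  simp [PhiW, dotProduct, mulVec, Fin.sum_univ_three, diagonal_apply, vecMulVec_apply]
  ring

lemma star_dotProduct_phiW_vecMulVec_mulVec_single (W : Matrix (Fin 3) (Fin 3) ℝ) (k : Fin 3) :
    star (Pi.single k 1) ⬝ᵥ PhiW W (vecMulVec (Pi.single k 1) (star (Pi.single k 1))) *ᵥ
      Pi.single k 1 = (W k k : ℂ) - 1 := by
  rw [star_dotProduct_phiW_vecMulVec_mulVec]
  simp [Pi.single_apply]

lemma star_dotProduct_phiW_vecMulVec_mulVec_of_unimodular {W : Matrix (Fin 3) (Fin 3) ℝ}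
    (hrow : ∀ i, ∑ j, W i j = 3) {x : Fin 3 → ℂ} (hx : ∀ m, star (x m) * x m = 1) :
    star x ⬝ᵥ PhiW W (vecMulVec x (star x)) *ᵥ x = 0 := by
  have hrowℂ : ∀ i, ∑ j, (W i j : ℂ) = 3 := fun i => by exact_mod_cast hrow i
  rw [star_dotProduct_phiW_vecMulVec_mulVec]
  simp only [dotProduct, Pi.star_apply, hx, mul_one, one_mul, hrowℂ, Fin.sum_univ_three]
  norm_num

lemma coeffs_eq_zero_of_vanishing_on_torus {t a₁ b₁ a₂ b₂ a₃ b₃ : ℂ}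
    (H : ∀ α β : ℂ, star α * α = 1 → star β * β = 1 →
      t + a₁ * α + b₁ * star α + a₂ * β + b₂ * star β + a₃ * (star α * β)
        + b₃ * (star β * α) = 0) :
    t = 0 ∧ a₁ = 0 ∧ b₁ = 0 ∧ a₂ = 0 ∧ b₂ = 0 ∧ a₃ = 0 ∧ b₃ = 0 := by
  have u1 : star (1 : ℂ) * 1 = 1 := by simp
  have um1 : star (-1 : ℂ) * -1 = 1 := by simp
  have uI : star Complex.I * Complex.I = 1 := by simp
  have umI : star (-Complex.I) * -Complex.I = 1 := by simp
  have h1 := H 1 1 u1 u1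
  have h2 := H (-1) 1 um1 u1
  have h3 := H 1 (-1) u1 um1
  have h4 := H (-1) (-1) um1 um1
  have h5 := H Complex.I 1 uI u1
  have h6 := H (-Complex.I) 1 umI u1
  have h7 := H Complex.I (-1) uI um1
  have h8 := H (-Complex.I) (-1) umI um1
  have h9 := H 1 Complex.I u1 uI
  have h10 := H 1 (-Complex.I) u1 umI
  simp only [Complex.star_def, map_one, map_neg, Complex.conj_I]
    at h1 h2 h3 h4 h5 h6 h7 h8 h9 h10
  have s₁ : a₁ + b₁ = 0 := by linear_combination (h1 - h2 + h3 - h4) / 4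
  have s₂ : a₂ + b₂ = 0 := by linear_combination (h1 + h2 - h3 - h4) / 4
  have s₃ : a₃ + b₃ = 0 := by linear_combination (h1 - h2 - h3 + h4) / 4
  have d₁₃ : a₁ - b₁ - a₃ + b₃ = 0 := by
    linear_combination -Complex.I * (h5 - h6) / 2 + (a₁ - b₁ - a₃ + b₃) * Complex.I_sq
  have d₁₃' : a₁ - b₁ + a₃ - b₃ = 0 := by
    linear_combination -Complex.I * (h7 - h8) / 2 + (a₁ - b₁ + a₃ - b₃) * Complex.I_sq
  have d₂₃ : a₂ - b₂ + a₃ - b₃ = 0 := by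
    linear_combination -Complex.I * (h9 - h10) / 2 + (a₂ - b₂ + a₃ - b₃) * Complex.I_sq
  refine ⟨?_, ?_, ?_, ?_, ?_, ?_, ?_⟩
  · linear_combination (h1 + h2 + h3 + h4) / 4
  · linear_combination s₁ / 2 + (d₁₃ + d₁₃') / 4
  · linear_combination s₁ / 2 - (d₁₃ + d₁₃') / 4
  · linear_combination s₂ / 2 + d₂₃ / 2 - (d₁₃' - d₁₃) / 4
  · linear_combination s₂ / 2 - d₂₃ / 2 + (d₁₃' - d₁₃) / 4
  · linear_combination s₃ / 2 + (d₁₃' - d₁₃) / 4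
  · linear_combination s₃ / 2 - (d₁₃' - d₁₃) / 4

lemma dotProduct_conjKronSelf_vecCons_one (c : Fin 3 × Fin 3 → ℂ) (α β : ℂ) :
    c ⬝ᵥ conjKronSelf ![1, α, β]
      = c (0,0) + c (1,1) * (star α * α) + c (2,2) * (star β * β) + c (0,1) * α
        + c (1,0) * star α + c (0,2) * β + c (2,0) * star β + c (1,2) * (star α * β)
        + c (2,1) * (star β * α) := by
  simp only [dotProduct, conjKronSelf, Fintype.sum_prod_type, Fin.sum_univ_three]
  simp
  ring

lemma eq_zero_of_dotProduct_conjKronSelf_eq_zero {c : Fin 3 × Fin 3 → ℂ} {i j : Fin 3}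
    (hij : i ≠ j) (hi : c (i, i) = 0) (hj : c (j, j) = 0)
    (H : ∀ x : Fin 3 → ℂ, (∀ m, star (x m) * x m = 1) → c ⬝ᵥ conjKronSelf x = 0) :
    c = 0 := by
  obtain ⟨htrace, h01, h10, h02, h20, h12, h21⟩ :
      c (0,0) + c (1,1) + c (2,2) = 0 ∧ c (0,1) = 0 ∧ c (1,0) = 0 ∧ c (0,2) = 0 ∧
        c (2,0) = 0 ∧ c (1,2) = 0 ∧ c (2,1) = 0 := by
    refine coeffs_eq_zero_of_vanishing_on_torus fun α β hα hβ => ?_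
    have hx : ∀ m, star (![1, α, β] m) * ![1, α, β] m = 1 := by
      intro m
      fin_cases m
      exacts [by simp, hα, hβ]
    have := H _ hx
    rw [dotProduct_conjKronSelf_vecCons_one, hα, hβ] at this
    linear_combination this
  have hdiag : ∀ a, c (a, a) = 0 := by
    intro a
    fin_cases i <;> fin_cases j <;> fin_cases a <;>
      simp only [Fin.zero_eta, Fin.mk_one, Fin.reduceFinMk] at hi hj ⊢ <;>
      first | exact absurd rfl hij | assumption | linear_combination htrace - hi - hj
  ext ⟨a, b⟩
  fin_cases a <;> fin_cases b <;>
    first | exact hdiag _ | assumption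

theorem optimal_of_two_saturated_vertices_general (W : Matrix (Fin 3) (Fin 3) ℝ)
    (hrow : ∀ i, ∑ j, W i j = 3)
    (i j : Fin 3) (hij : i ≠ j) (hii : W i i = 1) (hjj : W j j = 1) :
    IsOptimal (PhiW W) := by
  intro Ψ hΨ hΦΨ
  apply eq_zero_of_choiMatrix_eq_zero
  funext p
  have hker : ∀ x, star x ⬝ᵥ PhiW W (vecMulVec x (star x)) *ᵥ x = 0 →
      ChoiMatrix Ψ p ⬝ᵥ conjKronSelf x = 0 :=
    fun x hx => congrFun (choiMatrix_mulVec_conjKronSelf_eq_zero hΨ hΦΨ hx) p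
  have hdiag : ∀ k, W k k = 1 → ChoiMatrix Ψ p (k, k) = 0 := fun k hk => by
    have := hker (Pi.single k 1) (by rw [star_dotProduct_phiW_vecMulVec_mulVec_single, hk]; simp)
    rwa [conjKronSelf_single, dotProduct_single, mul_one] at this
  exact eq_zero_of_dotProduct_conjKronSelf_eq_zero hij (hdiag i hii) (hdiag j hjj)
    fun x hx => hker x (star_dotProduct_phiW_vecMulVec_mulVec_of_unimodular hrow hx)

/-- If `W` is doubly stochastic (with sums `3`), two diagonal entries equal `1`, and
`Φ_W` is positive, then `Φ_W` is optimal. -/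
theorem optimal_of_two_saturated_vertices (W : Matrix (Fin 3) (Fin 3) ℝ)
    (hW : ∀ i j, 0 ≤ W i j)
    (hrow : ∀ i, ∑ j, W i j = 3) (hcol : ∀ j, ∑ i, W i j = 3)
    (i j : Fin 3) (hij : i ≠ j) (hii : W i i = 1) (hjj : W j j = 1)
    (hpos : IsPositiveMap (PhiW W)) :
    IsOptimal (PhiW W) :=
  optimal_of_two_saturated_vertices_general W hrow i j hij hii hjj
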